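/- arXiv:2603.20814 — 3 statements merged into one kernel-verified Lean document; each statement's English description precedes it below -/
import Mathlib

section
/- Let G be a finite simple connected graph with exactly n ≥ 4 edges such that G has exactly one vertex of degree one, exactly one vertex of degree three, and all other vertices have degree two. Then G is isomorphic to the tadpole graph T_{n,i} for some i with 3 ≤ i < n. -/
open scoped Classical

noncomputable section

/-- The term `|f x - f y| ^ p` as a function on unordered pairs. -/
noncomputable def edgeTerm {V : Type*} (p : ℝ) (f : V → ℝ) : Sym2 V → ℝ :=
  Sym2.lift ⟨fun x y => |f x - f y| ^ p, fun x y => by dsimp only; rw [abs_sub_comm]⟩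

/-- The `p`-Rayleigh quotient of a function on a finite graph. -/
noncomputable def rayleigh {V : Type*} [Fintype V] [DecidableEq V] (G : SimpleGraph V)
    (p : ℝ) (f : V → ℝ) : ℝ :=
  (∑ e ∈ G.edgeFinset, edgeTerm p f e) / ∑ v, |f v| ^ p

/-- The first `p`-Dirichlet eigenvalue: infimum of the Rayleigh quotient over nonzero
functions vanishing on the boundary (vertices of degree one). -/
noncomputable def lambda1 {V : Type*} [Fintype V] [DecidableEq V] (G : SimpleGraph V)
    (p : ℝ) : ℝ :=
  sInf {r | ∃ f : V → ℝ, f ≠ 0 ∧ (∀ v, G.degree v = 1 → f v = 0) ∧ r = rayleigh G p f}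

/-- The tadpole graph `T_{n,i}` on vertices `0,…,n-1` (vertex `t_k` is `k-1`):
edges `t_k t_{k+1}` for `1 ≤ k ≤ n-1` together with the edge `t_1 t_i`. -/
def tadpole (n i : ℕ) : SimpleGraph (Fin n) :=
  SimpleGraph.fromRel (fun a b => a.val + 1 = b.val ∨ (a.val = 0 ∧ b.val = i - 1))

/-- The path graph on `n` vertices `0,…,n-1`. -/
def pathG (n : ℕ) : SimpleGraph (Fin n) :=
  SimpleGraph.fromRel (fun a b : Fin n => a.val + 1 = b.val)

/-- The set of edges of `G` with exactly one endpoint in `U`. -/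
noncomputable def crossEdges {V : Type*} [Fintype V] [DecidableEq V] (G : SimpleGraph V)
    (U : Finset V) : Finset (Sym2 V) :=
  G.edgeFinset.filter fun e =>
    Sym2.lift ⟨fun x y => (x ∈ U ∧ y ∉ U) ∨ (x ∉ U ∧ y ∈ U),
      fun x y => by simp only [eq_iff_iff]; tauto⟩ e

/-- The Dirichlet Cheeger constant: infimum of `|E(U,Uᶜ)|/|U|` over nonempty sets `U`
of interior vertices (vertices of degree at least two). -/
noncomputable def dCheeger {V : Type*} [Fintype V] [DecidableEq V] (G : SimpleGraph V) : ℝ :=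
  sInf {r | ∃ U : Finset V, U.Nonempty ∧ (∀ v ∈ U, 2 ≤ G.degree v) ∧
    r = ((crossEdges G U).card : ℝ) / U.card}

/-!
Let `u` be the leaf and `w` the vertex of degree three. A longest path `u = x₀, …, x_L = x`
cannot be extended at `x`, so `x`, which has degree at least two, is adjacent to some earlier
`x_j` with `j ≤ L - 2`. Then `x_j` has the three distinct neighbours `x_{j-1}, x_{j+1}, x`
(for `j = 0` already two neighbours contradict `deg u = 1`), so `x_j = w`. Read backwards,
the path and its chord give an injective homomorphism `f : T_{L+1, L-j+1} →g G` with
`deg_G (f a) ≤ deg_T a` for every `a`. Such a homomorphism maps every neighbourhood onto the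
neighbourhood of the image, so, `G` being connected, it is an isomorphism. Finally the
handshake lemma gives `|V| = |E| = n`.
-/

namespace SimpleGraph

variable {V W : Type*} {G : SimpleGraph V} {G' : SimpleGraph W}

lemma card_le_degree_of_forall_adj {v : V} [Fintype (G.neighborSet v)] {s : Finset V}
    (hs : ∀ y ∈ s, G.Adj v y) : s.card ≤ G.degree v := by
  rw [← card_neighborFinset_eq_degree]
  exact Finset.card_le_card fun y hy ↦ (mem_neighborFinset G v y).2 (hs y hy)

lemma card_eq_card_edgeFinset_of_degree [Fintype V] {u w : V} (huw : u ≠ w)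
    (hu : G.degree u = 1) (hw : G.degree w = 3)
    (hdeg : ∀ v, v ≠ u → v ≠ w → G.degree v = 2) :
    Fintype.card V = G.edgeFinset.card := by
  have hw' : w ∈ Finset.univ.erase u := Finset.mem_erase.2 ⟨huw.symm, Finset.mem_univ w⟩
  have hsum : ∑ v, G.degree v = ∑ _v : V, 2 := by
    rw [← Finset.add_sum_erase _ _ (Finset.mem_univ u), ← Finset.add_sum_erase _ _ hw',
      ← Finset.add_sum_erase _ _ (Finset.mem_univ u), ← Finset.add_sum_erase _ _ hw', hu, hw,
      Finset.sum_congr rfl fun v hv ↦ ?_]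
    · ring
    · simp only [Finset.mem_erase] at hv
      exact hdeg v hv.2.1 hv.1
  rw [sum_degrees_eq_twice_card_edges, Finset.sum_const, Finset.card_univ, smul_eq_mul] at hsum
  omega

namespace Hom

variable [Fintype V] [Fintype W] (f : G →g G')

lemma map_neighborFinset_eq (hf : Function.Injective f)
    (hdeg : ∀ v, G'.degree (f v) ≤ G.degree v) (v : V) :
    (G.neighborFinset v).map ⟨f, hf⟩ = G'.neighborFinset (f v) := by
  refine Finset.eq_of_subset_of_card_le (fun y hy ↦ ?_) ?_
  · obtain ⟨x, hx, rfl⟩ := Finset.mem_map.1 hy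
    exact (mem_neighborFinset _ _ _).2 (f.map_adj ((mem_neighborFinset _ _ _).1 hx))
  · simpa only [Finset.card_map, card_neighborFinset_eq_degree] using hdeg v

lemma adj_iff_of_degree_le (hf : Function.Injective f)
    (hdeg : ∀ v, G'.degree (f v) ≤ G.degree v) {v v' : V} :
    G'.Adj (f v) (f v') ↔ G.Adj v v' := by
  refine ⟨fun h ↦ ?_, f.map_adj⟩
  rw [← mem_neighborFinset, ← map_neighborFinset_eq f hf hdeg, Finset.mem_map] at h
  obtain ⟨x, hx, hxv⟩ := h
  exact (mem_neighborFinset _ _ _).1 (hf hxv ▸ hx)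

lemma surjective_of_degree_le [Nonempty V] (hf : Function.Injective f)
    (hdeg : ∀ v, G'.degree (f v) ≤ G.degree v) (hG' : G'.Connected) :
    Function.Surjective f := by
  have hclosed : ∀ ⦃y z⦄, G'.Adj y z → y ∈ Set.range f → z ∈ Set.range f := by
    rintro y z hyz ⟨v, rfl⟩
    rw [← mem_neighborFinset, ← map_neighborFinset_eq f hf hdeg, Finset.mem_map] at hyz
    obtain ⟨x, -, rfl⟩ := hyz
    exact ⟨x, rfl⟩
  have hwalk : ∀ {y z} (q : G'.Walk y z), y ∈ Set.range f → z ∈ Set.range f := by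
    intro y z q
    induction q with
    | nil => exact id
    | cons h _ ih => exact fun hy ↦ ih (hclosed h hy)
  intro z
  obtain ⟨v⟩ := ‹Nonempty V›
  exact hwalk (hG'.preconnected (f v) z).some ⟨v, rfl⟩

theorem nonempty_iso_of_degree_le [Nonempty V] (hf : Function.Injective f)
    (hdeg : ∀ v, G'.degree (f v) ≤ G.degree v) (hG' : G'.Connected) : Nonempty (G ≃g G') :=
  ⟨{ Equiv.ofBijective f ⟨hf, f.surjective_of_degree_le hf hdeg hG'⟩ with
    map_rel_iff' := f.adj_iff_of_degree_le hf hdeg }⟩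

end Hom

theorem exists_isPath_forall_adj_mem_support [Fintype V] (G : SimpleGraph V) (u : V) :
    ∃ (x : V) (p : G.Walk u x), p.IsPath ∧ ∀ y, G.Adj x y → y ∈ p.support := by
  have : Nonempty (Σ x, G.Path u x) := ⟨⟨u, Path.nil⟩⟩
  obtain ⟨⟨x, p, hp⟩, hmax⟩ := Finite.exists_max fun q : Σ x, G.Path u x ↦ q.2.1.length
  refine ⟨x, p, hp, fun y hxy ↦ by_contra fun hy ↦ ?_⟩
  have := hmax ⟨y, p.concat hxy, hp.concat hy hxy⟩
  simp only [Walk.length_concat] at this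
  omega

end SimpleGraph

section Tadpole

variable {n i : ℕ}

lemma tadpole_adj {a b : Fin n} : (tadpole n i).Adj a b ↔ a.val ≠ b.val ∧
    (a.val + 1 = b.val ∨ a.val = 0 ∧ b.val = i - 1 ∨
      b.val + 1 = a.val ∨ b.val = 0 ∧ a.val = i - 1) := by
  rw [tadpole, SimpleGraph.fromRel_adj, or_assoc, Fin.val_ne_iff]

lemma tadpole_degree_pos (hn : 2 ≤ n) (a : Fin n) : 0 < (tadpole n i).degree a := by
  rw [SimpleGraph.degree_pos_iff_exists_adj]
  by_cases ha : a.val + 1 < n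
  · exact ⟨⟨a.val + 1, ha⟩, tadpole_adj.2 (by dsimp only; omega)⟩
  · exact ⟨⟨a.val - 1, by omega⟩, tadpole_adj.2 (by dsimp only; omega)⟩

lemma two_le_degree_tadpole (hi : 3 ≤ i) (hin : i ≤ n) {a : Fin n} (ha : a.val + 1 < n) :
    2 ≤ (tadpole n i).degree a := by
  obtain ⟨b, hab, hb⟩ : ∃ b : Fin n, (tadpole n i).Adj a b ∧ b.val ≠ a.val + 1 := by
    rcases Nat.eq_zero_or_pos a.val with h | h
    · exact ⟨⟨i - 1, by omega⟩, tadpole_adj.2 (by dsimp only; omega), by dsimp only; omega⟩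
    · exact ⟨⟨a.val - 1, by omega⟩, tadpole_adj.2 (by dsimp only; omega),
        by dsimp only; omega⟩
  calc 2 = ({⟨a.val + 1, ha⟩, b} : Finset (Fin n)).card :=
        (Finset.card_pair (by simp only [ne_eq, Fin.ext_iff]; omega)).symm
    _ ≤ _ := SimpleGraph.card_le_degree_of_forall_adj <| by
        simp only [Finset.mem_insert, Finset.mem_singleton, forall_eq_or_imp, forall_eq]
        exact ⟨tadpole_adj.2 (by dsimp only; omega), hab⟩

lemma three_le_degree_tadpole (hi : 3 ≤ i) (hin : i < n) :
    3 ≤ (tadpole n i).degree ⟨i - 1, by omega⟩ := by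
  calc 3 = ({⟨i - 2, by omega⟩, ⟨i, hin⟩, ⟨0, by omega⟩} : Finset (Fin n)).card :=
        (Finset.card_eq_three.2 ⟨_, _, _, by simp only [ne_eq, Fin.ext_iff]; omega,
          by simp only [ne_eq, Fin.ext_iff]; omega,
          by simp only [ne_eq, Fin.ext_iff]; omega, rfl⟩).symm
    _ ≤ _ := SimpleGraph.card_le_degree_of_forall_adj <| by
        simp only [Finset.mem_insert, Finset.mem_singleton, forall_eq_or_imp, forall_eq]
        refine ⟨tadpole_adj.2 ?_, tadpole_adj.2 ?_, tadpole_adj.2 ?_⟩ <;> dsimp only <;> omega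

end Tadpole

namespace SimpleGraph.Walk

variable {V : Type*} {G : SimpleGraph V} {u x : V} {p : G.Walk u x}

lemma IsPath.getVert_eq_getVert_iff (hp : p.IsPath) {a b : ℕ} (ha : a ≤ p.length)
    (hb : b ≤ p.length) : p.getVert a = p.getVert b ↔ a = b :=
  ⟨fun h ↦ hp.getVert_injOn ha hb h, congrArg p.getVert⟩

lemma IsPath.exists_adj_getVert [Fintype V] (hp : p.IsPath)
    (hmax : ∀ y, G.Adj x y → y ∈ p.support) (hu : 0 < G.degree u)
    (hdeg : ∀ v ≠ u, 2 ≤ G.degree v) :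
    ∃ j, j + 2 ≤ p.length ∧ G.Adj x (p.getVert j) := by
  have hmem : ∀ y, G.Adj x y → ∃ j ≤ p.length, p.getVert j = y := fun y hy ↦
    (mem_support_iff_exists_getVert.1 (hmax y hy)).imp fun _ h ↦ ⟨h.2, h.1⟩
  have hL : 1 ≤ p.length := by
    by_contra! h
    obtain rfl := eq_of_length_eq_zero (by omega : p.length = 0)
    obtain ⟨y, hy⟩ := (G.degree_pos_iff_exists_adj u).1 hu
    obtain ⟨j, hj, rfl⟩ := hmem y hy
    rw [show j = 0 by omega, getVert_zero] at hy
    exact hy.ne rfl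
  have hxu : x ≠ u := fun h ↦ by
    have := (hp.getVert_eq_getVert_iff le_rfl (Nat.zero_le _)).1
      (by rw [getVert_length, getVert_zero, h])
    omega
  obtain ⟨y, hy, hyx⟩ := Finset.exists_mem_ne (s := G.neighborFinset x)
    (by rw [card_neighborFinset_eq_degree]; exact hdeg x hxu) (p.getVert (p.length - 1))
  obtain ⟨j, hj, rfl⟩ := hmem y ((mem_neighborFinset _ _ _).1 hy)
  refine ⟨j, ?_, (mem_neighborFinset _ _ _).1 hy⟩
  have hjL : j ≠ p.length := by
    rintro rfl
    rw [getVert_length, mem_neighborFinset] at hy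
    exact G.loopless.irrefl x hy
  have hjL' : j ≠ p.length - 1 := by rintro rfl; exact hyx rfl
  omega

lemma IsPath.two_le_degree_getVert [Fintype V] (hp : p.IsPath) {j : ℕ} (hj : j + 2 ≤ p.length)
    (hadj : G.Adj x (p.getVert j)) : 2 ≤ G.degree (p.getVert j) := by
  have hne : p.getVert (j + 1) ≠ p.getVert p.length := by
    rw [ne_eq, hp.getVert_eq_getVert_iff (by omega) le_rfl]
    omega
  calc 2 = ({p.getVert (j + 1), p.getVert p.length} : Finset V).card :=
        (Finset.card_pair hne).symm
    _ ≤ _ := card_le_degree_of_forall_adj <| by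
        simp only [Finset.mem_insert, Finset.mem_singleton, forall_eq_or_imp, forall_eq,
          getVert_length]
        exact ⟨p.adj_getVert_succ (by omega), hadj.symm⟩

lemma IsPath.three_le_degree_getVert [Fintype V] (hp : p.IsPath) {j : ℕ} (hj₁ : 1 ≤ j)
    (hj : j + 2 ≤ p.length) (hadj : G.Adj x (p.getVert j)) : 3 ≤ G.degree (p.getVert j) := by
  have hinj := fun a b (ha : a ≤ p.length) (hb : b ≤ p.length) ↦
    (hp.getVert_eq_getVert_iff ha hb).not.2
  calc 3 = ({p.getVert (j - 1), p.getVert (j + 1), p.getVert p.length} : Finset V).card :=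
        (Finset.card_eq_three.2 ⟨_, _, _, hinj _ _ (by omega) (by omega) (by omega),
          hinj _ _ (by omega) le_rfl (by omega), hinj _ _ (by omega) le_rfl (by omega), rfl⟩).symm
    _ ≤ _ := card_le_degree_of_forall_adj <| by
        simp only [Finset.mem_insert, Finset.mem_singleton, forall_eq_or_imp, forall_eq,
          getVert_length]
        refine ⟨?_, p.adj_getVert_succ (by omega), hadj.symm⟩
        exact Nat.sub_add_cancel hj₁ ▸ (p.adj_getVert_succ (i := j - 1) (by omega)).symm

/-- Vertex `t_k` of the tadpole goes to `x_{L+1-k}`: the tail ends at `u = x₀` and the cycle is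
`x_j, …, x_L`. -/
def tadpoleHom (p : G.Walk u x) {j : ℕ} (hadj : G.Adj x (p.getVert j)) :
    tadpole (p.length + 1) (p.length - j + 1) →g G where
  toFun a := p.getVert (p.length - a)
  map_rel' {a b} h := by
    have hedge : ∀ a b : Fin (p.length + 1), a.val ≠ b.val →
        (a.val + 1 = b.val ∨ a.val = 0 ∧ b.val = p.length - j) →
        G.Adj (p.getVert (p.length - a)) (p.getVert (p.length - b)) := by
      rintro a b hab (h | ⟨ha, hb⟩)
      · have := p.adj_getVert_succ (i := p.length - b) (by omega)
        rwa [show p.length - b + 1 = p.length - a by omega, adj_comm] at this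
      · rwa [ha, hb, Nat.sub_zero, Nat.sub_sub_self (by omega), getVert_length]
    rw [tadpole_adj] at h
    rcases h with ⟨hab, h | h | h | h⟩
    · exact hedge a b hab (.inl h)
    · exact hedge a b hab (.inr (by omega))
    · exact (hedge b a hab.symm (.inl h)).symm
    · exact (hedge b a hab.symm (.inr (by omega))).symm

lemma tadpoleHom_apply {j : ℕ} (hadj : G.Adj x (p.getVert j)) (a : Fin (p.length + 1)) :
    p.tadpoleHom hadj a = p.getVert (p.length - a) := rfl

lemma IsPath.tadpoleHom_injective (hp : p.IsPath) {j : ℕ} (hadj : G.Adj x (p.getVert j)) :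
    Function.Injective (p.tadpoleHom hadj) := by
  intro a b h
  rw [tadpoleHom_apply, tadpoleHom_apply, hp.getVert_eq_getVert_iff (by omega) (by omega)] at h
  exact Fin.ext (by omega)

lemma IsPath.degree_tadpoleHom_le [Fintype V] (hp : p.IsPath) {j : ℕ} (hj₁ : 1 ≤ j)
    (hj : j + 2 ≤ p.length) (hadj : G.Adj x (p.getVert j)) {w : V} (hjw : p.getVert j = w)
    (hu : G.degree u = 1) (hw : G.degree w = 3)
    (hdeg : ∀ v, v ≠ u → v ≠ w → G.degree v = 2) (a : Fin (p.length + 1)) :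
    G.degree (p.tadpoleHom hadj a) ≤ (tadpole (p.length + 1) (p.length - j + 1)).degree a := by
  rw [tadpoleHom_apply]
  by_cases haL : a.val = p.length
  · rw [haL, Nat.sub_self, getVert_zero, hu]
    exact tadpole_degree_pos (by omega) a
  by_cases haj : a.val = p.length - j
  · rw [haj, Nat.sub_sub_self (by omega), hjw, hw]
    convert three_le_degree_tadpole (n := p.length + 1) (i := p.length - j + 1)
      (by omega) (by omega) using 2
    exact Fin.ext (by dsimp only; omega)
  have hau : p.getVert (p.length - a) ≠ u := fun h ↦ by
    have := (hp.getVert_eq_getVert_iff (by omega) (by omega)).1 (h.trans p.getVert_zero.symm)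
    omega
  have haw : p.getVert (p.length - a) ≠ w := by
    rw [← hjw, ne_eq, hp.getVert_eq_getVert_iff (by omega) (by omega)]
    omega
  rw [hdeg _ hau haw]
  exact two_le_degree_tadpole (by omega) (by omega) (by omega)

end SimpleGraph.Walk

theorem degree_sequence_tadpole_general {V : Type*} [Fintype V]
    (G : SimpleGraph V) (n : ℕ) (hcard : G.edgeFinset.card = n)
    (hconn : G.Connected)
    (hdeg : ∃ u w : V, u ≠ w ∧ G.degree u = 1 ∧ G.degree w = 3 ∧
      ∀ v : V, v ≠ u → v ≠ w → G.degree v = 2) :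
    ∃ i : ℕ, 3 ≤ i ∧ i < n ∧ Nonempty (G ≃g tadpole n i) := by
  obtain ⟨u, w, huw, hu, hw, hdeg⟩ := hdeg
  have h2 : ∀ v ≠ u, 2 ≤ G.degree v := fun v hvu ↦ by
    rcases eq_or_ne v w with rfl | hvw
    · omega
    · exact (hdeg v hvu hvw).ge
  obtain ⟨x, p, hp, hmax⟩ := G.exists_isPath_forall_adj_mem_support u
  obtain ⟨j, hj, hadj⟩ := hp.exists_adj_getVert hmax (by omega) h2
  have hj₁ : 1 ≤ j := by
    by_contra! hj₀
    have := hp.two_le_degree_getVert hj hadj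
    rw [Nat.lt_one_iff.1 hj₀, SimpleGraph.Walk.getVert_zero, hu] at this
    omega
  have hjw : p.getVert j = w := by
    by_contra hjw
    have hju : p.getVert j ≠ u := fun h ↦ by
      have := (hp.getVert_eq_getVert_iff (by omega) (by omega)).1 (h.trans p.getVert_zero.symm)
      omega
    have := hp.three_le_degree_getVert hj₁ hj hadj
    rw [hdeg _ hju hjw] at this
    omega
  obtain ⟨e⟩ := (p.tadpoleHom hadj).nonempty_iso_of_degree_le (hp.tadpoleHom_injective hadj)
    (hp.degree_tadpoleHom_le hj₁ hj hadj hjw hu hw hdeg) hconn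
  have hn : p.length + 1 = n := by
    rw [← hcard, ← SimpleGraph.card_eq_card_edgeFinset_of_degree huw hu hw hdeg,
      ← Fintype.card_fin (p.length + 1)]
    exact Fintype.card_congr e.toEquiv
  subst hn
  exact ⟨p.length - j + 1, by omega, by omega, ⟨e.symm⟩⟩

/-- A connected graph with `n ≥ 4` edges, exactly one vertex of degree one, exactly one
vertex of degree three and all other vertices of degree two is a tadpole graph `T_{n,i}`
for some `3 ≤ i < n`. -/
theorem degree_sequence_tadpole {V : Type*} [Fintype V] [DecidableEq V]
    (G : SimpleGraph V) (n : ℕ) (hn : 4 ≤ n) (hcard : G.edgeFinset.card = n)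
    (hconn : G.Connected)
    (hdeg : ∃ u w : V, u ≠ w ∧ G.degree u = 1 ∧ G.degree w = 3 ∧
      ∀ v : V, v ≠ u → v ≠ w → G.degree v = 2) :
    ∃ i : ℕ, 3 ≤ i ∧ i < n ∧ Nonempty (G ≃g tadpole n i) :=
  degree_sequence_tadpole_general G n hcard hconn hdeg
end
end

section
/- Let G be a finite simple connected graph with exactly n ≥ 4 edges whose boundary B(G) (the set of vertices of degree one) is nonempty, and suppose the Dirichlet Cheeger constant satisfies h_D(G) = 1/(n-1). Then G has exactly one vertex of degree one (i.e., |B(G)| = 1), and moreover any nonempty U ⊆ Ω(G) achieving the minimum in the definition of h_D(G) satisfies U = Ω(G), |U| = n-1, and |E(U,U^c)| = 1. -/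
open scoped Classical

noncomputable section

/-!
Fix a pendant vertex `p`. A set `U` of interior vertices misses `p`, so by connectivity it has a
crossing edge, and the degree sum `2n ≥ 1 + 2|U|` gives `|U| ≤ n - 1`; hence every ratio
`|E(U,Uᶜ)|/|U|` is at least `1/(n-1)`, with equality only if `|E(U,Uᶜ)| = 1` and `|U| = n - 1`,
which forces `U = Ω(G)`. When `n ≥ 2` the neighbour of a pendant vertex is interior, so a minimizer
exists; it is then `Ω(G)`, and the pendant edges are distinct crossing edges of `Ω(G)`, so there
is only one pendant vertex.
-/

open Finset SimpleGraph

section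

variable {V : Type*} [Fintype V] [DecidableEq V] {G : SimpleGraph V}

def dirichletBoundary (G : SimpleGraph V) : Finset V :=
  univ.filter fun v => G.degree v = 1

def dirichletInterior (G : SimpleGraph V) : Finset V :=
  univ.filter fun v => 2 ≤ G.degree v

lemma mk_mem_crossEdges {U : Finset V} {x y : V} (h : G.Adj x y) (hx : x ∈ U) (hy : y ∉ U) :
    s(x, y) ∈ crossEdges G U := by
  simp only [crossEdges, mem_filter, mem_edgeFinset, Sym2.lift_mk]
  exact ⟨h, Or.inl ⟨hx, hy⟩⟩

lemma SimpleGraph.Connected.crossEdges_nonempty (hconn : G.Connected) {U : Finset V}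
    (hU : U.Nonempty) {p : V} (hp : p ∉ U) : (crossEdges G U).Nonempty := by
  obtain ⟨u, hu⟩ := hU
  obtain ⟨w⟩ := hconn.preconnected u p
  obtain ⟨d, -, hd₁, hd₂⟩ := w.exists_boundary_dart (U : Set V) hu hp
  exact ⟨_, mk_mem_crossEdges d.adj hd₁ hd₂⟩

lemma card_lt_card_edgeFinset_of_two_le_degree {p : V} (hp : G.degree p = 1) {U : Finset V}
    (hU : ∀ v ∈ U, 2 ≤ G.degree v) : #U < #G.edgeFinset := by
  have hpU : p ∉ U := fun h => by have := hU p h; omega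
  have hsum : ∑ v ∈ insert p U, G.degree v ≤ 2 * #G.edgeFinset :=
    sum_degrees_eq_twice_card_edges G ▸ sum_le_sum_of_subset (subset_univ _)
  have hUsum : #U * 2 ≤ ∑ v ∈ U, G.degree v := by
    simpa using card_nsmul_le_sum U _ 2 hU
  rw [sum_insert hpU, hp] at hsum
  omega

lemma SimpleGraph.Connected.two_le_degree_of_adj_of_degree_eq_one (hconn : G.Connected)
    (hE : 2 ≤ #G.edgeFinset) {a b : V} (hb : G.degree b = 1) (hba : G.Adj b a) :
    2 ≤ G.degree a := by
  by_contra! ha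
  have ha : G.degree a = 1 :=
    le_antisymm (by omega) ((G.degree_pos_iff_exists_adj _).2 ⟨b, hba.symm⟩)
  have hnbr : ∀ {x y}, x = a ∨ x = b → G.Adj x y → y = a ∨ y = b := by
    rintro x y (rfl | rfl) hxy
    · exact Or.inr ((degree_eq_one_iff_existsUnique_adj.1 ha).unique hxy hba.symm)
    · exact Or.inl ((degree_eq_one_iff_existsUnique_adj.1 hb).unique hxy hba)
  have hall : univ ⊆ {a, b} := by
    intro v _
    by_contra hv
    obtain ⟨w⟩ := hconn.preconnected a v
    obtain ⟨d, -, hd₁, hd₂⟩ := w.exists_boundary_dart {a, b} (by simp) (by simpa using hv)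
    exact hd₂ (hnbr hd₁ d.adj)
  have hsum : ∑ v, G.degree v ≤ ∑ v ∈ {a, b}, G.degree v := sum_le_sum_of_subset hall
  rw [sum_degrees_eq_twice_card_edges, sum_pair hba.ne', ha, hb] at hsum
  omega

lemma SimpleGraph.Connected.exists_adj_two_le_degree (hconn : G.Connected)
    (hE : 2 ≤ #G.edgeFinset) {b : V} (hb : G.degree b = 1) :
    ∃ a, G.Adj b a ∧ 2 ≤ G.degree a := by
  obtain ⟨a, hba⟩ := (G.degree_pos_iff_exists_adj b).1 (hb ▸ one_pos)
  exact ⟨a, hba, hconn.two_le_degree_of_adj_of_degree_eq_one hE hb hba⟩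

lemma SimpleGraph.Connected.card_dirichletBoundary_le_card_crossEdges (hconn : G.Connected)
    (hE : 2 ≤ #G.edgeFinset) :
    #(dirichletBoundary G) ≤ #(crossEdges G (dirichletInterior G)) := by
  choose! f hadj hf using fun b (hb : b ∈ dirichletBoundary G) =>
    hconn.exists_adj_two_le_degree hE (mem_filter.1 hb).2
  refine card_le_card_of_injOn (fun b => s(b, f b)) (fun b hb => ?_) (fun b hb b' hb' heq => ?_)
  · have hb' : b ∉ dirichletInterior G := by simp [dirichletInterior, (mem_filter.1 hb).2]
    simp only [mem_coe, Sym2.eq_swap (a := b)]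
    exact mk_mem_crossEdges (hadj b hb).symm (by simp [dirichletInterior, hf b hb]) hb'
  · rcases Sym2.eq_iff.1 heq with ⟨h, -⟩ | ⟨h, -⟩
    · exact h
    · have := hf b' hb'
      rw [← h, (mem_filter.1 (mem_coe.1 hb)).2] at this
      omega

lemma exists_ratio_eq_dCheeger {a : V} (ha : 2 ≤ G.degree a) :
    ∃ U : Finset V, U.Nonempty ∧ (∀ v ∈ U, 2 ≤ G.degree v) ∧
      ((crossEdges G U).card : ℝ) / U.card = dCheeger G := by
  have hmem := Set.Nonempty.csInf_mem (s := {r | ∃ U : Finset V, U.Nonempty ∧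
      (∀ v ∈ U, 2 ≤ G.degree v) ∧ r = ((crossEdges G U).card : ℝ) / U.card})
    ⟨_, {a}, singleton_nonempty a, by simpa using ha, rfl⟩
    ((Set.finite_range fun U : Finset V => ((crossEdges G U).card : ℝ) / U.card).subset
      (by rintro r ⟨U, -, -, rfl⟩; exact ⟨U, rfl⟩))
  obtain ⟨U, hU, hUint, hUeq⟩ := hmem
  exact ⟨U, hU, hUint, hUeq.symm⟩

lemma Nat.eq_one_and_eq_of_div_eq_one_div {c u m : ℕ} (hc : 1 ≤ c) (hu₀ : 0 < u) (hu : u ≤ m)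
    (h : (c : ℝ) / u = 1 / m) : c = 1 ∧ u = m := by
  have hm : 0 < m := hu₀.trans_le hu
  rw [div_eq_div_iff (by positivity) (by positivity), one_mul] at h
  have h : c * m = u := by exact_mod_cast h
  have : c * m ≤ 1 * m := by omega
  have hc : c = 1 := le_antisymm (Nat.le_of_mul_le_mul_right this hm) hc
  exact ⟨hc, by simpa [hc] using h.symm⟩

lemma SimpleGraph.Connected.eq_dirichletInterior_of_ratio_eq (hconn : G.Connected) {p : V}
    (hp : G.degree p = 1) {U : Finset V} (hU : U.Nonempty) (hUint : ∀ v ∈ U, 2 ≤ G.degree v)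
    (h : ((crossEdges G U).card : ℝ) / U.card = 1 / ((#G.edgeFinset : ℝ) - 1)) :
    U = dirichletInterior G ∧ #U = #G.edgeFinset - 1 ∧ #(crossEdges G U) = 1 := by
  have hpU : p ∉ U := fun h => by have := hUint p h; omega
  have hU_lt := card_lt_card_edgeFinset_of_two_le_degree hp hUint
  have hΩ_lt := card_lt_card_edgeFinset_of_two_le_degree hp (U := dirichletInterior G)
    fun v hv => (mem_filter.1 hv).2
  rw [← Nat.cast_pred (by omega)] at h
  obtain ⟨hcross, hUcard⟩ := Nat.eq_one_and_eq_of_div_eq_one_div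
    (card_pos.2 (hconn.crossEdges_nonempty hU hpU)) (card_pos.2 hU) (by omega) h
  have hUΩ : U ⊆ dirichletInterior G := fun v hv => by simp [dirichletInterior, hUint v hv]
  exact ⟨eq_of_subset_of_card_le hUΩ (by omega), hUcard, hcross⟩

end

/-- If the Dirichlet Cheeger constant of a connected graph with `n ≥ 4` edges equals
`1/(n-1)`, then the graph has exactly one pendant vertex and any minimizing set `U`
is the whole interior, has `n-1` vertices, and has exactly one crossing edge. -/
theorem cheeger_equality_structure {V : Type*} [Fintype V] [DecidableEq V]
    (G : SimpleGraph V) (n : ℕ) (hn : 4 ≤ n) (hcard : G.edgeFinset.card = n)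
    (hconn : G.Connected) (hbd : ∃ v, G.degree v = 1)
    (hch : dCheeger G = 1 / ((n : ℝ) - 1)) :
    (Finset.univ.filter fun v : V => G.degree v = 1).card = 1 ∧
      ∀ U : Finset V, U.Nonempty → (∀ v ∈ U, 2 ≤ G.degree v) →
        ((crossEdges G U).card : ℝ) / U.card = dCheeger G →
        U = (Finset.univ.filter fun v : V => 2 ≤ G.degree v) ∧
          U.card = n - 1 ∧ (crossEdges G U).card = 1 := by
  subst hcard
  obtain ⟨p, hp⟩ := hbd
  have hE : 2 ≤ #G.edgeFinset := by omega
  have hmin : ∀ U : Finset V, U.Nonempty → (∀ v ∈ U, 2 ≤ G.degree v) →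
      ((crossEdges G U).card : ℝ) / U.card = dCheeger G →
      U = dirichletInterior G ∧ #U = #G.edgeFinset - 1 ∧ #(crossEdges G U) = 1 :=
    fun U hU hUint hUmin => hconn.eq_dirichletInterior_of_ratio_eq hp hU hUint (hUmin.trans hch)
  refine ⟨?_, hmin⟩
  obtain ⟨a, -, ha⟩ := hconn.exists_adj_two_le_degree hE hp
  obtain ⟨U, hU, hUint, hUmin⟩ := exists_ratio_eq_dCheeger ha
  obtain ⟨rfl, -, hcross⟩ := hmin U hU hUint hUmin
  have hle := hconn.card_dirichletBoundary_le_card_crossEdges hE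
  have hpos : 0 < #(dirichletBoundary G) := card_pos.2 ⟨p, by simp [dirichletBoundary, hp]⟩
  change #(dirichletBoundary G) = 1
  omega
end
end

section
/- Let p > 1 and let G be a finite simple connected graph with exactly n ≥ 4 edges whose boundary B(G) (the set of vertices of degree one) is nonempty. If G is a path graph (i.e., G is isomorphic to P_{n+1}), then λ_{1,p}(G) > λ_{1,p}(T_{n,3}). -/
open scoped Classical

noncomputable section

/-!
Let `h` be a nonnegative minimiser of the Rayleigh quotient of the path `0, 1, …, n` with
`h 0 = h n = 0` and mass one. A competitor that vanishes at the ends, lies above `h` and has no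
larger energy must equal `h`, since otherwise its larger mass would give a smaller quotient.
Raising a double zero `h j = h (j + 1) = 0` to `h (j + 2)` shows that `h 1 > 0`, and truncating
from below at `min (h 1) (h (n - 1))` shows that `h` stays above this value on the interior;
reflecting the path if necessary, `h 1 ≤ h 3`. On `T_{n,3}` give `t₁, t₂` the value
`t = max (h 2) (h 3)` and `t_k` the value `h k` for `k ≥ 3`. The two triangle edges at `t₃` cost
`2 |t - h 3| ^ p`, strictly less than the `|h 1| ^ p + |h 2 - h 1| ^ p + |h 3 - h 2| ^ p` spent on
the first three edges of the path, and the mass does not decrease, so the Rayleigh quotient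
drops below `λ_{1,p}(P_{n+1})`.
-/

open Finset

theorem edgeTerm_nonneg {V : Type*} (p : ℝ) (f : V → ℝ) (e : Sym2 V) : 0 ≤ edgeTerm p f e := by
  induction e using Sym2.ind with
  | _ x y => exact Real.rpow_nonneg (abs_nonneg _) p

section Energy

variable {V W : Type*} [Fintype V] [Fintype W] {p : ℝ} {f : V → ℝ}

def pMass (p : ℝ) (f : V → ℝ) : ℝ :=
  ∑ v, |f v| ^ p

theorem pMass_nonneg : 0 ≤ pMass p f :=
  sum_nonneg fun _ _ => Real.rpow_nonneg (abs_nonneg _) p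

theorem pMass_pos (hf : f ≠ 0) : 0 < pMass p f := by
  obtain ⟨v, hv⟩ := Function.ne_iff.1 hf
  exact sum_pos' (fun _ _ => Real.rpow_nonneg (abs_nonneg _) p)
    ⟨v, mem_univ v, Real.rpow_pos_of_pos (abs_pos.2 hv) p⟩

theorem pMass_zero (hp : p ≠ 0) : pMass p (0 : V → ℝ) = 0 := by
  simp [pMass, Real.zero_rpow hp]

theorem ne_zero_of_pMass_ne_zero (hp : p ≠ 0) (hf : pMass p f ≠ 0) : f ≠ 0 := by
  rintro rfl
  exact hf (pMass_zero hp)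

theorem pMass_smul (c : ℝ) : pMass p (c • f) = |c| ^ p * pMass p f := by
  simp only [pMass, mul_sum, Pi.smul_apply, smul_eq_mul, abs_mul,
    Real.mul_rpow (abs_nonneg _) (abs_nonneg _)]

theorem pMass_comp_equiv (e : V ≃ W) (f : W → ℝ) : pMass p (f ∘ e) = pMass p f :=
  e.sum_comp fun w => |f w| ^ p

theorem continuous_pMass (hp : 0 ≤ p) : Continuous (pMass (V := V) p) :=
  continuous_finsetSum _ fun v _ => (continuous_apply v).abs.rpow_const fun _ => Or.inr hp

theorem isCompact_setOf_pMass_eq_one (hp : 0 < p) : IsCompact {f : V → ℝ | pMass p f = 1} := by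
  refine Metric.isCompact_of_isClosed_isBounded
    (isClosed_eq (continuous_pMass hp.le) continuous_const)
    ((Metric.isBounded_closedBall (x := 0) (r := 1)).subset fun f hf => ?_)
  refine mem_closedBall_zero_iff.2 <| (pi_norm_le_iff_of_nonneg zero_le_one).2 fun v => ?_
  have hv : |f v| ^ p ≤ 1 := (hf : pMass p f = 1) ▸ single_le_sum (f := fun v => |f v| ^ p)
    (fun _ _ => Real.rpow_nonneg (abs_nonneg _) p) (mem_univ v)
  by_contra! h
  exact (Real.one_lt_rpow (by simpa using h) hp).not_ge hv

variable {G : SimpleGraph V} {G' : SimpleGraph W}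

def pEnergy (G : SimpleGraph V) (p : ℝ) (f : V → ℝ) : ℝ :=
  ∑ e ∈ G.edgeFinset, edgeTerm p f e

theorem pEnergy_nonneg : 0 ≤ pEnergy G p f :=
  sum_nonneg fun e _ => edgeTerm_nonneg p f e

theorem pEnergy_smul (c : ℝ) : pEnergy G p (c • f) = |c| ^ p * pEnergy G p f := by
  rw [pEnergy, pEnergy, mul_sum]
  refine sum_congr rfl fun e _ => ?_
  induction e using Sym2.ind with
  | _ x y =>
    show |c * f x - c * f y| ^ p = |c| ^ p * |f x - f y| ^ p
    rw [← mul_sub, abs_mul, Real.mul_rpow (abs_nonneg _) (abs_nonneg _)]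

theorem pEnergy_abs_le (hp : 0 ≤ p) : pEnergy G p (fun v => |f v|) ≤ pEnergy G p f := by
  refine sum_le_sum fun e _ => ?_
  induction e using Sym2.ind with
  | _ x y => exact Real.rpow_le_rpow (abs_nonneg _) (abs_abs_sub_abs_le_abs_sub _ _) hp

theorem continuous_pEnergy (hp : 0 ≤ p) : Continuous (pEnergy G p) := by
  refine continuous_finsetSum _ fun e _ => ?_
  induction e using Sym2.ind with
  | _ x y =>
    exact (((continuous_apply x).sub (continuous_apply y)).abs).rpow_const fun _ => Or.inr hp

theorem pEnergy_comp_iso (e : G ≃g G') (f : W → ℝ) : pEnergy G p (f ∘ e) = pEnergy G' p f := by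
  refine sum_nbij' (Sym2.map e) (Sym2.map e.symm) ?_ ?_ ?_ ?_ ?_
  · intro x hx
    rw [SimpleGraph.mem_edgeFinset] at hx ⊢
    exact e.toEmbedding.map_mem_edgeSet_iff.2 hx
  · intro x hx
    rw [SimpleGraph.mem_edgeFinset] at hx ⊢
    exact e.symm.toEmbedding.map_mem_edgeSet_iff.2 hx
  · intro x _
    simp [Sym2.map_map]
  · intro x _
    simp [Sym2.map_map]
  · intro x _
    induction x using Sym2.ind with
    | _ u v => rfl

def dirichletSphere (G : SimpleGraph V) (p : ℝ) : Set (V → ℝ) :=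
  {f | pMass p f = 1 ∧ ∀ v, G.degree v = 1 → f v = 0}

theorem isCompact_dirichletSphere (hp : 0 < p) : IsCompact (dirichletSphere G p) := by
  refine (isCompact_setOf_pMass_eq_one hp).inter_right
    (t := {f : V → ℝ | ∀ v, G.degree v = 1 → f v = 0}) ?_
  rw [Set.ofPred_forall]
  exact isClosed_iInter fun v =>
    isClosed_imp isOpen_const (isClosed_eq (continuous_apply v) continuous_const)

variable [DecidableEq V] [DecidableEq W]

theorem rayleigh_eq_div : rayleigh G p f = pEnergy G p f / pMass p f := rfl

theorem lambda1_le_rayleigh (hf : f ≠ 0) (hB : ∀ v, G.degree v = 1 → f v = 0) :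
    lambda1 G p ≤ rayleigh G p f :=
  csInf_le ⟨0, by rintro r ⟨g, -, -, rfl⟩; exact div_nonneg pEnergy_nonneg pMass_nonneg⟩
    ⟨f, hf, hB, rfl⟩

theorem lambda1_mul_pMass_le (hp : 0 < p) (hB : ∀ v, G.degree v = 1 → f v = 0) :
    lambda1 G p * pMass p f ≤ pEnergy G p f := by
  rcases eq_or_ne f 0 with rfl | hf
  · rw [pMass_zero hp.ne', mul_zero]
    exact pEnergy_nonneg
  · exact (le_div_iff₀ (pMass_pos hf)).1 (lambda1_le_rayleigh hf hB)

theorem exists_rayleigh_eq_of_iso (e : G ≃g G') {r : ℝ}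
    (h : ∃ f : W → ℝ, f ≠ 0 ∧ (∀ w, G'.degree w = 1 → f w = 0) ∧ r = rayleigh G' p f) :
    ∃ f : V → ℝ, f ≠ 0 ∧ (∀ v, G.degree v = 1 → f v = 0) ∧ r = rayleigh G p f := by
  obtain ⟨f, hf, hB, rfl⟩ := h
  refine ⟨f ∘ e, fun h0 => hf (funext fun w => by simpa using congrFun h0 (e.symm w)),
    fun v hv => hB (e v) (by rwa [e.degree_eq]), ?_⟩
  rw [rayleigh_eq_div, rayleigh_eq_div, pEnergy_comp_iso]
  exact congrArg _ (pMass_comp_equiv e.toEquiv f).symm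

theorem lambda1_eq_of_iso (e : G ≃g G') : lambda1 G p = lambda1 G' p := by
  unfold lambda1
  congr 1
  ext r
  exact ⟨exists_rayleigh_eq_of_iso e.symm, exists_rayleigh_eq_of_iso e⟩

theorem pEnergy_le_lambda1_of_isMinOn (hp : 0 < p) (hf : f ∈ dirichletSphere G p)
    (hmin : IsMinOn (pEnergy G p) (dirichletSphere G p) f) : pEnergy G p f ≤ lambda1 G p := by
  refine le_csInf ⟨_, f, ne_zero_of_pMass_ne_zero hp.ne' (hf.1 ▸ one_ne_zero), hf.2, rfl⟩ ?_
  rintro r ⟨g, hg, hgB, rfl⟩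
  set c := pMass p g ^ (-p⁻¹)
  have hc : |c| ^ p = (pMass p g)⁻¹ := by
    rw [abs_of_pos (Real.rpow_pos_of_pos (pMass_pos hg) _), ← Real.rpow_mul pMass_nonneg,
      neg_mul, inv_mul_cancel₀ hp.ne', Real.rpow_neg_one]
  have hcg : c • g ∈ dirichletSphere G p :=
    ⟨by rw [pMass_smul, hc, inv_mul_cancel₀ (pMass_pos hg).ne'], fun v hv => by simp [hgB v hv]⟩
  calc pEnergy G p f ≤ pEnergy G p (c • g) := hmin hcg
    _ = rayleigh G p g := by rw [pEnergy_smul, hc, rayleigh_eq_div, inv_mul_eq_div]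

theorem exists_nonneg_pEnergy_eq_lambda1 (hp : 0 < p) (hV : ∃ v, G.degree v ≠ 1) :
    ∃ f : V → ℝ, (∀ v, 0 ≤ f v) ∧ (∀ v, G.degree v = 1 → f v = 0) ∧ pMass p f = 1 ∧
      pEnergy G p f = lambda1 G p := by
  obtain ⟨v₀, hv₀⟩ := hV
  have hK : (dirichletSphere G p).Nonempty := by
    refine ⟨Pi.single v₀ 1, ?_, fun v hv => Pi.single_eq_of_ne (by rintro rfl; exact hv₀ hv) _⟩
    rw [pMass, sum_eq_single v₀ (fun v _ hv => by simp [hv, Real.zero_rpow hp.ne']) (by simp)]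
    simp
  obtain ⟨f, hf, hmin⟩ := (isCompact_dirichletSphere hp).exists_isMinOn hK
    (continuous_pEnergy hp.le).continuousOn
  have hM : pMass p (fun v => |f v|) = 1 := by simpa [pMass] using hf.1
  refine ⟨fun v => |f v|, fun v => abs_nonneg _, fun v hv => by simp [hf.2 v hv], hM,
    ((pEnergy_abs_le hp.le).trans (pEnergy_le_lambda1_of_isMinOn hp hf hmin)).antisymm ?_⟩
  calc lambda1 G p ≤ rayleigh G p (fun v => |f v|) :=
        lambda1_le_rayleigh (ne_zero_of_pMass_ne_zero hp.ne' (hM ▸ one_ne_zero))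
          fun v hv => by simp [hf.2 v hv]
    _ = pEnergy G p (fun v => |f v|) := by rw [rayleigh_eq_div, hM, div_one]

end Energy

theorem SimpleGraph.degree_ne_one_of_adj {V : Type*} {G : SimpleGraph V} {v x y : V}
    [Fintype (G.neighborSet v)] (hx : G.Adj v x) (hy : G.Adj v y) (hxy : x ≠ y) :
    G.degree v ≠ 1 := fun h =>
  hxy (card_le_one.1 h.le x (by simpa using hx) y (by simpa using hy))

theorem pathG_adj {n : ℕ} {u v : Fin n} :
    (pathG n).Adj u v ↔ u.val + 1 = v.val ∨ v.val + 1 = u.val := by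
  simp only [pathG, SimpleGraph.fromRel_adj, ne_eq, Fin.ext_iff]
  omega

theorem tadpole_adj_s16 {n i : ℕ} (hi : 2 ≤ i) {u v : Fin n} :
    (tadpole n i).Adj u v ↔ u.val + 1 = v.val ∨ v.val + 1 = u.val ∨
      (u.val = 0 ∧ v.val = i - 1) ∨ (v.val = 0 ∧ u.val = i - 1) := by
  simp only [tadpole, SimpleGraph.fromRel_adj, ne_eq, Fin.ext_iff]
  omega

theorem pathG_degree_eq_one_iff {m : ℕ} (hm : 1 ≤ m) (v : Fin (m + 1)) :
    (pathG (m + 1)).degree v = 1 ↔ v.val = 0 ∨ v.val = m := by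
  constructor
  · intro h
    by_contra! hv
    have hx : (pathG (m + 1)).Adj v ⟨v - 1, by omega⟩ := pathG_adj.2 (by dsimp only; omega)
    have hy : (pathG (m + 1)).Adj v ⟨v + 1, by omega⟩ := pathG_adj.2 (by dsimp only; omega)
    exact SimpleGraph.degree_ne_one_of_adj hx hy (by simp only [ne_eq, Fin.mk.injEq]; omega) h
  · intro hv
    rw [← SimpleGraph.card_neighborFinset_eq_degree, card_eq_one]
    refine ⟨⟨if v.val = 0 then 1 else m - 1, by split_ifs <;> omega⟩, ?_⟩
    ext w
    simp only [SimpleGraph.mem_neighborFinset, pathG_adj, mem_singleton, Fin.ext_iff]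
    split_ifs <;> omega

theorem tadpole_degree_ne_one {m : ℕ} (hm : 2 ≤ m) (v : Fin (m + 1)) (hv : v.val < m) :
    (tadpole (m + 1) 3).degree v ≠ 1 := by
  rcases Nat.eq_zero_or_pos v.val with h0 | h0
  · have hx : (tadpole (m + 1) 3).Adj v ⟨1, by omega⟩ :=
      (tadpole_adj_s16 (by norm_num)).2 (by simp only; omega)
    have hy : (tadpole (m + 1) 3).Adj v ⟨2, by omega⟩ :=
      (tadpole_adj_s16 (by norm_num)).2 (by simp [h0])
    exact SimpleGraph.degree_ne_one_of_adj hx hy (by simp)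
  · have hx : (tadpole (m + 1) 3).Adj v ⟨v - 1, by omega⟩ :=
      (tadpole_adj_s16 (by norm_num)).2 (by simp only; omega)
    have hy : (tadpole (m + 1) 3).Adj v ⟨v + 1, by omega⟩ :=
      (tadpole_adj_s16 (by norm_num)).2 (.inl rfl)
    exact SimpleGraph.degree_ne_one_of_adj hx hy (by simp only [ne_eq, Fin.mk.injEq]; omega)

/-- A function on `pathG (m + 1)` is encoded as a sequence, vertex `k` carrying the value `a k`
(see `pEnergy_pathG`); the values beyond `m` play no role. -/
def pathEnergy (p : ℝ) (m : ℕ) (a : ℕ → ℝ) : ℝ :=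
  ∑ k ∈ range m, |a (k + 1) - a k| ^ p

def pathMass (p : ℝ) (m : ℕ) (a : ℕ → ℝ) : ℝ :=
  ∑ k ∈ range (m + 1), |a k| ^ p

theorem pEnergy_pathG (p : ℝ) (m : ℕ) (a : ℕ → ℝ) :
    pEnergy (pathG (m + 1)) p (fun v => a v) = pathEnergy p m a := by
  symm
  refine sum_bij (fun k hk => s(⟨k, by simp at hk; omega⟩, ⟨k + 1, by simp at hk; omega⟩))
    (fun k hk => by simp [pathG_adj]) (fun k₁ _ k₂ _ h => by simp [Fin.ext_iff] at h; omega)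
    (fun e he => ?_) (fun k hk => by simp [edgeTerm, abs_sub_comm])
  induction e using Sym2.ind with
  | _ u v =>
    rw [SimpleGraph.mem_edgeFinset, SimpleGraph.mem_edgeSet, pathG_adj] at he
    rcases he with h | h
    · exact ⟨u, by simp; omega, by simp [h]⟩
    · exact ⟨v, by simp; omega, by simp [h]⟩

theorem pMass_pathG (p : ℝ) (m : ℕ) (a : ℕ → ℝ) :
    pMass p (fun v : Fin (m + 1) => a v) = pathMass p m a :=
  Fin.sum_univ_eq_sum_range (fun k => |a k| ^ p) (m + 1)

theorem pEnergy_tadpole_le (p : ℝ) {m : ℕ} (hm : 2 ≤ m) (g : ℕ → ℝ) :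
    pEnergy (tadpole (m + 1) 3) p (fun v => g v) ≤ pathEnergy p m g + |g 0 - g 2| ^ p := by
  set e₀₂ : Sym2 (Fin (m + 1)) := s(⟨0, by omega⟩, ⟨2, by omega⟩)
  have hsub : (tadpole (m + 1) 3).edgeFinset ⊆ insert e₀₂ (pathG (m + 1)).edgeFinset := by
    intro e he
    induction e using Sym2.ind with
    | _ u v =>
      rw [SimpleGraph.mem_edgeFinset, SimpleGraph.mem_edgeSet, tadpole_adj_s16 (by norm_num)] at he
      rw [mem_insert, SimpleGraph.mem_edgeFinset, SimpleGraph.mem_edgeSet, pathG_adj]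
      simp only [e₀₂, Sym2.eq_iff, Fin.ext_iff]
      omega
  have hnot : e₀₂ ∉ (pathG (m + 1)).edgeFinset := by
    rw [SimpleGraph.mem_edgeFinset, SimpleGraph.mem_edgeSet, pathG_adj]
    simp
  calc pEnergy (tadpole (m + 1) 3) p (fun v => g v)
      ≤ ∑ e ∈ insert e₀₂ (pathG (m + 1)).edgeFinset, edgeTerm p (fun v : Fin (m + 1) => g v) e :=
        sum_le_sum_of_subset_of_nonneg hsub fun e _ _ => edgeTerm_nonneg p _ e
    _ = pathEnergy p m g + |g 0 - g 2| ^ p := by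
        rw [sum_insert hnot, add_comm]
        exact congrArg (· + _) (pEnergy_pathG p m g)

section Sequence

variable {p : ℝ} {m : ℕ} {a b : ℕ → ℝ}

theorem pathEnergy_succ' : pathEnergy p (m + 1) a =
    |a 1 - a 0| ^ p + pathEnergy p m (fun k => a (k + 1)) := by
  rw [pathEnergy, sum_range_succ', add_comm]
  rfl

theorem pathMass_succ' : pathMass p (m + 1) a = |a 0| ^ p + pathMass p m (fun k => a (k + 1)) := by
  rw [pathMass, sum_range_succ', add_comm]
  rfl

theorem pathEnergy_reverse : pathEnergy p m (fun k => a (m - k)) = pathEnergy p m a := by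
  rw [pathEnergy, pathEnergy, ← sum_range_reflect]
  refine sum_congr rfl fun k hk => ?_
  rw [mem_range] at hk
  rw [show m - (m - 1 - k + 1) = k by omega, show m - (m - 1 - k) = k + 1 by omega, abs_sub_comm]

theorem pathMass_reverse : pathMass p m (fun k => a (m - k)) = pathMass p m a := by
  rw [pathMass, pathMass, ← sum_range_reflect]
  refine sum_congr rfl fun k hk => ?_
  rw [mem_range] at hk
  rw [show m - (m + 1 - 1 - k) = k by omega]

theorem pathEnergy_le_of_abs_le (hp : 0 ≤ p)
    (h : ∀ k < m, |b (k + 1) - b k| ≤ |a (k + 1) - a k|) : pathEnergy p m b ≤ pathEnergy p m a :=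
  sum_le_sum fun k hk => Real.rpow_le_rpow (abs_nonneg _) (h k (mem_range.1 hk)) hp

theorem pathMass_lt_of_le (hp : 0 < p) (ha : ∀ k, 0 ≤ a k) (hab : ∀ k ≤ m, a k ≤ b k)
    (hlt : ∃ k ≤ m, a k < b k) : pathMass p m a < pathMass p m b := by
  obtain ⟨k, hkm, hk⟩ := hlt
  refine sum_lt_sum (fun j hj => ?_) ⟨k, mem_range.2 (by omega), ?_⟩
  · have := hab j (by simpa [Nat.lt_succ_iff] using hj)
    rw [abs_of_nonneg (ha j), abs_of_nonneg ((ha j).trans this)]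
    exact Real.rpow_le_rpow (ha j) this hp.le
  · rw [abs_of_nonneg (ha k), abs_of_nonneg ((ha k).trans hk.le)]
    exact Real.rpow_lt_rpow (ha k) hk hp

theorem pathEnergy_update {j : ℕ} (hj : j + 2 ≤ m) (h₀ : a j = 0) (h₁ : a (j + 1) = 0) :
    pathEnergy p m (Function.update a (j + 1) (a (j + 2))) = pathEnergy p m a := by
  obtain ⟨r, rfl⟩ : ∃ r, m = j + 2 + r := ⟨m - (j + 2), by omega⟩
  set b := Function.update a (j + 1) (a (j + 2))
  have hb : ∀ k ≠ j + 1, b k = a k := fun k hk => Function.update_of_ne hk _ _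
  have hlow : ∀ k ∈ range j, |b (k + 1) - b k| ^ p = |a (k + 1) - a k| ^ p := fun k hk => by
    rw [mem_range] at hk
    rw [hb k (by omega), hb (k + 1) (by omega)]
  have hhigh : ∀ k ∈ range r, |b (j + 2 + k + 1) - b (j + 2 + k)| ^ p =
      |a (j + 2 + k + 1) - a (j + 2 + k)| ^ p := fun k _ => by
    rw [hb (j + 2 + k) (by omega), hb (j + 2 + k + 1) (by omega)]
  simp only [pathEnergy, sum_range_add, sum_range_succ, sum_congr rfl hlow, sum_congr rfl hhigh]
  rw [show b (j + 1) = a (j + 2) from Function.update_self _ _ _, hb j (by omega),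
    hb (j + 1 + 1) (by omega), h₀, h₁]
  ring_nf
  rw [abs_zero]
  ring

end Sequence

/-- A normalised nonnegative first Dirichlet eigenfunction of the path with `m` edges; its
energy is `λ_{1,p}(P_{m+1})` (see `exists_isGroundState`). -/
structure IsGroundState (p : ℝ) (m : ℕ) (a : ℕ → ℝ) : Prop where
  apply_zero : a 0 = 0
  apply_last : a m = 0
  nonneg : ∀ k, 0 ≤ a k
  pathMass_eq_one : pathMass p m a = 1
  mul_pathMass_le : ∀ b : ℕ → ℝ, b 0 = 0 → b m = 0 →
    pathEnergy p m a * pathMass p m b ≤ pathEnergy p m b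

namespace IsGroundState

variable {p : ℝ} {m : ℕ} {a : ℕ → ℝ}

theorem reverse (ha : IsGroundState p m a) : IsGroundState p m (fun k => a (m - k)) where
  apply_zero := by simpa using ha.apply_last
  apply_last := by simpa using ha.apply_zero
  nonneg _ := ha.nonneg _
  pathMass_eq_one := pathMass_reverse.trans ha.pathMass_eq_one
  mul_pathMass_le b hb₀ hbm := by
    rw [pathEnergy_reverse]
    simpa only [pathMass_reverse, pathEnergy_reverse] using
      ha.mul_pathMass_le (fun k => b (m - k)) (by simpa) (by simpa)

theorem not_forall_eq_zero (hp : p ≠ 0) (ha : IsGroundState p m a) : ¬ ∀ k ≤ m, a k = 0 := by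
  intro h
  have hM := ha.pathMass_eq_one
  rw [pathMass, sum_eq_zero fun k hk => by
    rw [h k (Nat.lt_succ_iff.1 (mem_range.1 hk)), abs_zero, Real.zero_rpow hp]] at hM
  exact zero_ne_one hM

theorem pathEnergy_pos (hp : 0 < p) (ha : IsGroundState p m a) : 0 < pathEnergy p m a := by
  refine (sum_nonneg fun _ _ => Real.rpow_nonneg (abs_nonneg _) p).lt_of_ne fun h =>
    ha.not_forall_eq_zero hp.ne' ?_
  have hstep : ∀ k < m, a (k + 1) = a k := fun k hk => by
    have := (sum_eq_zero_iff_of_nonneg fun _ _ => Real.rpow_nonneg (abs_nonneg _) p).1 h.symm k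
      (mem_range.2 hk)
    rwa [Real.rpow_eq_zero (abs_nonneg _) hp.ne', abs_eq_zero, sub_eq_zero] at this
  intro k hk
  induction k with
  | zero => exact ha.apply_zero
  | succ k ih => rw [hstep k (by omega), ih (by omega)]

theorem eq_of_le_of_pathEnergy_le (hp : 0 < p) (ha : IsGroundState p m a) {b : ℕ → ℝ}
    (hb₀ : b 0 = 0) (hbm : b m = 0) (hab : ∀ k ≤ m, a k ≤ b k)
    (hE : pathEnergy p m b ≤ pathEnergy p m a) : ∀ k ≤ m, b k = a k := by
  by_contra! h
  obtain ⟨k, hkm, hk⟩ := h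
  have hM := pathMass_lt_of_le hp ha.nonneg hab ⟨k, hkm, (hab k hkm).lt_of_ne' hk⟩
  rw [ha.pathMass_eq_one] at hM
  nlinarith [ha.mul_pathMass_le b hb₀ hbm, ha.pathEnergy_pos hp]

theorem apply_add_two_eq_zero (hp : 0 < p) (ha : IsGroundState p m a) {j : ℕ} (hj : j + 2 ≤ m)
    (h₀ : a j = 0) (h₁ : a (j + 1) = 0) : a (j + 2) = 0 := by
  have hab : ∀ k ≤ m, a k ≤ Function.update a (j + 1) (a (j + 2)) k := fun k _ => by
    rcases eq_or_ne k (j + 1) with rfl | hk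
    · rw [Function.update_self, h₁]
      exact ha.nonneg _
    · rw [Function.update_of_ne hk]
  have := ha.eq_of_le_of_pathEnergy_le hp
    (by rw [Function.update_of_ne (by omega)]; exact ha.apply_zero)
    (by rw [Function.update_of_ne (by omega)]; exact ha.apply_last) hab
    (pathEnergy_update hj h₀ h₁).le (j + 1) (by omega)
  rwa [Function.update_self, h₁] at this

theorem apply_one_pos (hp : 0 < p) (ha : IsGroundState p m a) : 0 < a 1 := by
  refine (ha.nonneg 1).lt_of_ne fun h₁ => ha.not_forall_eq_zero hp.ne' fun k => ?_
  induction k using Nat.twoStepInduction with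
  | zero => exact fun _ => ha.apply_zero
  | one => exact fun _ => h₁.symm
  | more k ih₀ ih₁ =>
    exact fun hk => ha.apply_add_two_eq_zero hp hk (ih₀ (by omega)) (ih₁ (by omega))

theorem min_le_apply (hp : 0 < p) (ha : IsGroundState p m a) {k : ℕ} (hk₀ : 0 < k) (hkm : k < m) :
    min (a 1) (a (m - 1)) ≤ a k := by
  set c := min (a 1) (a (m - 1))
  set b : ℕ → ℝ := fun k => if 0 < k ∧ k < m then max (a k) c else a k
  have hb : ∀ j, j = 0 ∨ j = 1 ∨ j = m - 1 ∨ m ≤ j → b j = a j := fun j hj => by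
    simp only [b]
    split_ifs with h
    · exact max_eq_left (by rcases hj with rfl | rfl | rfl | hj <;>
        first | omega | exact min_le_left _ _ | exact min_le_right _ _)
    · rfl
  have hE : pathEnergy p m b ≤ pathEnergy p m a := pathEnergy_le_of_abs_le hp.le fun j hj => by
    by_cases hj' : j = 0 ∨ j + 1 = m
    · rw [hb j (by omega), hb (j + 1) (by omega)]
    · simp only [b, if_pos (show 0 < j ∧ j < m by omega),
        if_pos (show 0 < j + 1 ∧ j + 1 < m by omega)]
      exact abs_max_sub_max_le_abs _ _ _
  have hab : ∀ j ≤ m, a j ≤ b j := fun j _ => by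
    simp only [b]
    split_ifs
    · exact le_max_left _ _
    · exact le_rfl
  have := ha.eq_of_le_of_pathEnergy_le hp ((hb 0 (by simp)).trans ha.apply_zero)
    ((hb m (by simp)).trans ha.apply_last) hab hE k hkm.le
  simp only [b, if_pos (show 0 < k ∧ k < m from ⟨hk₀, hkm⟩)] at this
  exact max_eq_left_iff.1 this

theorem exists_apply_one_le_apply_three (hp : 0 < p) (ha : IsGroundState p m a) (hm : 4 ≤ m) :
    ∃ h, IsGroundState p m h ∧ pathEnergy p m h = pathEnergy p m a ∧ h 1 ≤ h 3 := by
  have h₃ := ha.min_le_apply hp (k := 3) (by norm_num) (by omega)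
  have h₃' := ha.min_le_apply hp (k := m - 3) (by omega) (by omega)
  rcases le_total (a 1) (a (m - 1)) with h | h
  · exact ⟨a, ha, rfl, by rwa [min_eq_left h] at h₃⟩
  · rw [min_eq_right h] at h₃'
    exact ⟨_, ha.reverse, pathEnergy_reverse, h₃'⟩

end IsGroundState

theorem exists_isGroundState {p : ℝ} {m : ℕ} (hp : 0 < p) (hm : 2 ≤ m) :
    ∃ a, IsGroundState p m a ∧ pathEnergy p m a = lambda1 (pathG (m + 1)) p := by
  obtain ⟨f, hf₀, hfB, hfM, hfE⟩ := exists_nonneg_pEnergy_eq_lambda1 (G := pathG (m + 1)) hp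
    ⟨⟨1, by omega⟩, by rw [Ne, pathG_degree_eq_one_iff (by omega)]; show ¬(1 = 0 ∨ 1 = m); omega⟩
  set a : ℕ → ℝ := fun k => f (Fin.ofNat (m + 1) k)
  have hfa : (fun v : Fin (m + 1) => a v) = f := funext fun v => by simp [a]
  have hE : pathEnergy p m a = lambda1 (pathG (m + 1)) p := by rw [← pEnergy_pathG, hfa, hfE]
  refine ⟨a, ⟨?_, ?_, fun k => hf₀ _, ?_, fun b hb₀ hbm => ?_⟩, hE⟩
  · exact hfB _ ((pathG_degree_eq_one_iff (by omega) _).2 (Or.inl (by simp)))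
  · exact hfB _ ((pathG_degree_eq_one_iff (by omega) _).2 (Or.inr (by simp)))
  · rw [← pMass_pathG, hfa, hfM]
  · rw [hE, ← pMass_pathG, ← pEnergy_pathG]
    refine lambda1_mul_pMass_le hp fun v hv => ?_
    rcases (pathG_degree_eq_one_iff (by omega) v).1 hv with h | h <;> simp [h, hb₀, hbm]

theorem two_mul_rpow_max_sub_lt {p x y z : ℝ} (hp : 0 < p) (hx : 0 < x) (hxz : x ≤ z) :
    2 * |max y z - z| ^ p < |x| ^ p + |y - x| ^ p + |z - y| ^ p := by
  have hx' : 0 < |x| ^ p := Real.rpow_pos_of_pos (abs_pos.2 hx.ne') p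
  have hyx : 0 ≤ |y - x| ^ p := Real.rpow_nonneg (abs_nonneg _) p
  have hzy : 0 ≤ |z - y| ^ p := Real.rpow_nonneg (abs_nonneg _) p
  rcases le_total y z with h | h
  · rw [max_eq_right h, sub_self, abs_zero, Real.zero_rpow hp.ne', mul_zero]
    linarith
  · have hle : |y - z| ^ p ≤ |y - x| ^ p := Real.rpow_le_rpow (abs_nonneg _)
      (by rw [abs_of_nonneg (by linarith), abs_of_nonneg (by linarith)]; linarith) hp.le
    rw [max_eq_left h, abs_sub_comm z y]
    linarith

/-- Vertex `k` of `tadpole (m + 1) 3` is `t_{k+1}`, so this gives `t₁, t₂` the value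
`max (h 2) (h 3)` and `t_k` the value `h k` for `k ≥ 3`. -/
def tadpoleTest (h : ℕ → ℝ) (k : ℕ) : ℝ :=
  if k ≤ 1 then max (h 2) (h 3) else h (k + 1)

section TadpoleTest

variable {p : ℝ} {m : ℕ} {h : ℕ → ℝ}

theorem tadpoleTest_add_two (h : ℕ → ℝ) (k : ℕ) : tadpoleTest h (k + 1 + 1) = h (k + 3) := by
  simp [tadpoleTest]

theorem pEnergy_tadpoleTest_lt (hp : 0 < p) (hm : 2 ≤ m) (hh : IsGroundState p (m + 1) h)
    (h₁₃ : h 1 ≤ h 3) :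
    pEnergy (tadpole (m + 1) 3) p (fun v => tadpoleTest h v) < pathEnergy p (m + 1) h := by
  obtain ⟨r, rfl⟩ : ∃ r, m = r + 2 := ⟨m - 2, by omega⟩
  calc _ ≤ pathEnergy p (r + 2) (tadpoleTest h) + |tadpoleTest h 0 - tadpoleTest h 2| ^ p :=
        pEnergy_tadpole_le p hm _
    _ = 2 * |max (h 2) (h 3) - h 3| ^ p + pathEnergy p r (fun k => h (k + 3)) := by
      simp only [pathEnergy_succ', tadpoleTest_add_two]
      simp only [tadpoleTest, zero_le_one, le_refl, if_true, sub_self, abs_zero,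
        Real.zero_rpow hp.ne', abs_sub_comm (h 3)]
      ring
    _ < _ := by
      simp only [pathEnergy_succ', hh.apply_zero, sub_zero]
      linarith [two_mul_rpow_max_sub_lt hp (hh.apply_one_pos hp) h₁₃ (y := h 2)]

theorem one_le_pMass_tadpoleTest (hp : 0 < p) (hm : 2 ≤ m) (hh : IsGroundState p (m + 1) h)
    (h₁₃ : h 1 ≤ h 3) : 1 ≤ pMass p (fun v : Fin (m + 1) => tadpoleTest h v) := by
  obtain ⟨r, rfl⟩ : ∃ r, m = r + 2 := ⟨m - 2, by omega⟩
  rw [pMass_pathG, ← hh.pathMass_eq_one]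
  simp only [pathMass_succ', tadpoleTest_add_two]
  simp only [tadpoleTest, zero_le_one, le_refl, if_true, hh.apply_zero, abs_zero,
    Real.zero_rpow hp.ne', zero_add]
  have hle : ∀ x, 0 ≤ x → x ≤ max (h 2) (h 3) → |x| ^ p ≤ |max (h 2) (h 3)| ^ p :=
    fun x hx hxt => Real.rpow_le_rpow (abs_nonneg x) (abs_le_abs_of_nonneg hx hxt) hp.le
  linarith [hle (h 1) (hh.nonneg 1) (h₁₃.trans (le_max_right _ _)),
    hle (h 2) (hh.nonneg 2) (le_max_left _ _)]

theorem lambda1_tadpole_lt (hp : 0 < p) (hm : 2 ≤ m) (hh : IsGroundState p (m + 1) h)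
    (h₁₃ : h 1 ≤ h 3) : lambda1 (tadpole (m + 1) 3) p < pathEnergy p (m + 1) h := by
  have hM := one_le_pMass_tadpoleTest hp hm hh h₁₃
  have hB : ∀ v, (tadpole (m + 1) 3).degree v = 1 → tadpoleTest h v = 0 := fun v hv => by
    have : v.val = m := by
      by_contra
      exact tadpole_degree_ne_one hm v (by omega) hv
    simp [tadpoleTest, this, hh.apply_last, show ¬m ≤ 1 by omega]
  calc lambda1 _ p ≤ rayleigh _ p _ := lambda1_le_rayleigh
        (ne_zero_of_pMass_ne_zero hp.ne' (zero_lt_one.trans_le hM).ne') hB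
    _ ≤ pEnergy _ p _ := by rw [rayleigh_eq_div]; exact div_le_self pEnergy_nonneg hM
    _ < _ := pEnergy_tadpoleTest_lt hp hm hh h₁₃

end TadpoleTest

theorem path_case_gt_tadpole_general {V : Type*} [Fintype V] [DecidableEq V] (G : SimpleGraph V)
    (n : ℕ) (hn : 4 ≤ n) (hpath : Nonempty (G ≃g pathG (n + 1)))
    {p : ℝ} (hp : 1 < p) :
    lambda1 G p > lambda1 (tadpole n 3) p := by
  have hp₀ : 0 < p := zero_lt_one.trans hp
  obtain ⟨e⟩ := hpath
  obtain ⟨a, ha, haE⟩ := exists_isGroundState hp₀ (by omega : 2 ≤ n)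
  obtain ⟨h, hh, hhE, h₁₃⟩ := ha.exists_apply_one_le_apply_three hp₀ hn
  obtain ⟨m, rfl⟩ : ∃ m, n = m + 1 := ⟨n - 1, by omega⟩
  rw [gt_iff_lt, lambda1_eq_of_iso e, ← haE, ← hhE]
  exact lambda1_tadpole_lt hp₀ (by omega) hh h₁₃

/-- A path graph with `n ≥ 4` edges has strictly larger first `p`-Dirichlet eigenvalue
than the tadpole graph `T_{n,3}`. -/
theorem path_case_gt_tadpole {V : Type*} [Fintype V] [DecidableEq V] (G : SimpleGraph V)
    (n : ℕ) (hn : 4 ≤ n) (hcard : G.edgeFinset.card = n) (hconn : G.Connected)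
    (hbd : ∃ v, G.degree v = 1) (hpath : Nonempty (G ≃g pathG (n + 1)))
    {p : ℝ} (hp : 1 < p) :
    lambda1 G p > lambda1 (tadpole n 3) p :=
  path_case_gt_tadpole_general G n hn hpath hp
end
end
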